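/- arXiv:2401.03252 — 9 statements merged into one kernel-verified Lean document; each statement's English description precedes it below -/
import Mathlib

section
/- Let ν be the unique positive real root of the equation (1+ν)·log(1+ν⁻¹) + log(ν)/(1+ν) = 1, and set T = e·(1+ν⁻¹)^(−ν) and T′ = e·(1+ν⁻¹)^(−(1+ν)). Then the pair (T′, T) satisfies T′·log T′ − T′ = T·log T − T and T′·log T′ = (T′ − T)·log(T − T′). -/
/-!
Write `L = log (1 + ν⁻¹)`. Then `log T = 1 - ν L` and, since `(1 + ν⁻¹)⁻¹ = ν / (1 + ν)`,
`T' = ν T / (1 + ν)` and `T - T' = T / (1 + ν)`. Both sides of the first identity equal `-ν L T`.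
After dividing by `T / (1 + ν)`, the second identity becomes
`log (1 + ν) = 1 + ν - ν (2 + ν) L`, which is the defining equation of `ν` once
`log ν = log (1 + ν) - L` is substituted.
-/

open Real

lemma log_exp_one_mul_rpow_neg {a : ℝ} (ha : 0 < a) (s : ℝ) :
    log (exp 1 * a ^ (-s)) = 1 - s * log a := by
  rw [log_mul (exp_pos 1).ne' (rpow_pos_of_pos ha _).ne', log_exp, log_rpow ha]
  ring

lemma log_one_add_inv {ν : ℝ} (hν : 0 < ν) : log (1 + ν⁻¹) = log (1 + ν) - log ν := by
  rw [← log_div (by positivity) hν.ne']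
  congr 1
  field_simp
  ring

lemma one_add_inv_rpow_neg_one_add {ν : ℝ} (hν : 0 < ν) :
    (1 + ν⁻¹) ^ (-(1 + ν)) = ν / (1 + ν) * (1 + ν⁻¹) ^ (-ν) := by
  have hinv : (1 + ν⁻¹)⁻¹ = ν / (1 + ν) := by field_simp; ring
  rw [neg_add, rpow_add (by positivity), rpow_neg_one, hinv, mul_comm]

lemma log_one_add_of_root {ν : ℝ} (hν : 0 < ν)
    (hroot : (1 + ν) * log (1 + ν⁻¹) + log ν / (1 + ν) = 1) :
    log (1 + ν) = 1 + ν - ν * (2 + ν) * log (1 + ν⁻¹) := by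
  have hlogν : log ν = log (1 + ν) - log (1 + ν⁻¹) := by rw [log_one_add_inv hν]; ring
  rw [hlogν] at hroot
  generalize log (1 + ν⁻¹) = L at hroot ⊢
  field_simp at hroot
  linarith

theorem stmt_4 (ν T T' : ℝ) (hν : 0 < ν)
    (hroot : (1 + ν) * Real.log (1 + ν⁻¹) + Real.log ν / (1 + ν) = 1)
    (hT : T = Real.exp 1 * (1 + ν⁻¹) ^ (-ν))
    (hT' : T' = Real.exp 1 * (1 + ν⁻¹) ^ (-(1 + ν))) :
    T' * Real.log T' - T' = T * Real.log T - T ∧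
    T' * Real.log T' = (T' - T) * Real.log (T - T') := by
  have ha : 0 < 1 + ν⁻¹ := by positivity
  have hT'T : T' = ν / (1 + ν) * T := by
    rw [hT', hT, one_add_inv_rpow_neg_one_add hν]; ring
  have hTpos : 0 < T := by rw [hT]; positivity
  have hlogT : log T = 1 - ν * log (1 + ν⁻¹) := hT ▸ log_exp_one_mul_rpow_neg ha ν
  have hlogT' : log T' = 1 - (1 + ν) * log (1 + ν⁻¹) :=
    hT' ▸ log_exp_one_mul_rpow_neg ha (1 + ν)
  have hsub : T - T' = T / (1 + ν) := by rw [hT'T]; field_simp; ring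
  have hlogsub : log (T - T') = log T - log (1 + ν) := by
    rw [hsub, log_div hTpos.ne' (by positivity)]
  constructor
  · rw [hlogT, hlogT', hT'T]; field_simp; ring
  · rw [hlogT', hlogsub, hlogT, log_one_add_of_root hν hroot, hT'T]; field_simp; ring
end

section
/- Let 0 < a < b. Then ∫_a^b √(ab)/(π·x·√((b−x)(x−a))) dx = 1. -/
/-!
Under the substitution `u = 1/x` the integrand becomes `1/x²` times the arcsine density
`1 / (π √((u - 1/b) (1/a - u)))` on `[1/b, 1/a]`, and the arcsine density on `[α, β]` has the
antiderivative `arcsin ((2u - α - β) / (β - α)) / π`, which rises from `-1/2` to `1/2`.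
-/

open Real MeasureTheory Set intervalIntegral

noncomputable def arcsineDensity (α β u : ℝ) : ℝ := (π * √((u - α) * (β - u)))⁻¹

lemma hasDerivAt_arcsin_affine {α β u : ℝ} (hu : u ∈ Ioo α β) :
    HasDerivAt (fun u => arcsin ((2 * u - α - β) / (β - α))) (√((u - α) * (β - u)))⁻¹ u := by
  obtain ⟨hαu, huβ⟩ := hu
  have hβα : 0 < β - α := by linarith
  have hP : 0 < √((u - α) * (β - u)) := sqrt_pos.2 (by nlinarith)
  have ht : HasDerivAt (fun u => (2 * u - α - β) / (β - α)) (2 / (β - α)) u := by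
    simpa using (((hasDerivAt_id u).const_mul 2).sub_const α).sub_const β |>.div_const (β - α)
  have hlo : (2 * u - α - β) / (β - α) ≠ -1 := by
    rw [ne_eq, div_eq_iff hβα.ne']; linarith
  have hhi : (2 * u - α - β) / (β - α) ≠ 1 := by
    rw [ne_eq, div_eq_iff hβα.ne']; linarith
  have hsqrt : √(1 - ((2 * u - α - β) / (β - α)) ^ 2) = 2 * √((u - α) * (β - u)) / (β - α) := by
    rw [← sqrt_sq (by positivity : 0 ≤ 2 * √((u - α) * (β - u)) / (β - α))]
    congr 1
    rw [div_pow, div_pow, mul_pow, sq_sqrt (by nlinarith)]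
    field_simp
    ring
  refine ((hasDerivAt_arcsin hlo hhi).comp u ht).congr_deriv ?_
  rw [hsqrt]
  field_simp

theorem integral_arcsineDensity {α β : ℝ} (hαβ : α < β) :
    ∫ u in α..β, arcsineDensity α β u = 1 := by
  have hderiv := fun u (hu : u ∈ Ioo α β) => hasDerivAt_arcsin_affine hu
  have hcont : ContinuousOn (fun u => arcsin ((2 * u - α - β) / (β - α))) (Icc α β) := by
    fun_prop
  have hnonneg : ∀ u ∈ Ioo α β, 0 ≤ (√((u - α) * (β - u)))⁻¹ := fun u _ => by positivity
  have hint : ∫ u in α..β, (√((u - α) * (β - u)))⁻¹ = π := by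
    -- the density blows up at both ends; being a nonnegative derivative makes it integrable
    rw [integral_eq_sub_of_hasDerivAt_of_le hαβ.le hcont hderiv
      ((intervalIntegrable_iff_integrableOn_Ioc_of_le hαβ.le).2
        (integrableOn_deriv_of_nonneg hcont hderiv hnonneg))]
    have hβα : β - α ≠ 0 := by linarith
    have h1 : (2 * β - α - β) / (β - α) = 1 := by field_simp; ring
    have h2 : (2 * α - α - β) / (β - α) = -1 := by field_simp; ring
    rw [h1, h2, arcsin_one, arcsin_neg_one]
    ring
  simp only [arcsineDensity, mul_inv, intervalIntegral.integral_const_mul, hint]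
  exact inv_mul_cancel₀ pi_ne_zero

lemma image_inv_Ioo_of_pos {a b : ℝ} (ha : 0 < a) (hb : 0 < b) :
    Inv.inv '' Ioo a b = Ioo b⁻¹ a⁻¹ := by
  ext u
  simp only [image_inv_eq_inv, mem_inv, mem_Ioo]
  constructor
  · rintro ⟨hau, hub⟩
    have hu : 0 < u := inv_pos.1 (ha.trans hau)
    exact ⟨(inv_lt_comm₀ hb hu).2 hub, (lt_inv_comm₀ hu ha).2 hau⟩
  · rintro ⟨hbu, hua⟩
    have hu : 0 < u := (inv_pos.2 hb).trans hbu
    exact ⟨(lt_inv_comm₀ hu ha).1 hua, (inv_lt_comm₀ hb hu).1 hbu⟩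

theorem integral_inv_sq_smul_comp_inv {E : Type*} [NormedAddCommGroup E] [NormedSpace ℝ E]
    (g : ℝ → E) {a b : ℝ} (ha : 0 < a) (hab : a ≤ b) :
    ∫ x in a..b, (x ^ 2)⁻¹ • g x⁻¹ = ∫ u in b⁻¹..a⁻¹, g u := by
  have hderiv : ∀ x ∈ Ioo a b, HasDerivWithinAt Inv.inv (-(x ^ 2)⁻¹) (Ioo a b) x :=
    fun x hx => (hasDerivAt_inv (ha.trans hx.1).ne').hasDerivWithinAt
  rw [integral_of_le hab, integral_of_le (inv_anti₀ ha hab), integral_Ioc_eq_integral_Ioo,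
    integral_Ioc_eq_integral_Ioo, ← image_inv_Ioo_of_pos ha (ha.trans_le hab),
    integral_image_eq_integral_abs_deriv_smul measurableSet_Ioo hderiv inv_injective.injOn]
  refine setIntegral_congr_fun measurableSet_Ioo fun x _ => ?_
  rw [abs_neg, abs_of_nonneg (by positivity)]

lemma sqrt_mul_div_eq_inv_sq_mul_arcsineDensity {a b x : ℝ} (ha : 0 < a) (hb : 0 < b)
    (hx : 0 < x) :
    √(a * b) / (π * x * √((b - x) * (x - a))) = (x ^ 2)⁻¹ * arcsineDensity b⁻¹ a⁻¹ x⁻¹ := by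
  have h : (x⁻¹ - b⁻¹) * (a⁻¹ - x⁻¹) = (b - x) * (x - a) / (x * √(a * b)) ^ 2 := by
    rw [mul_pow, sq_sqrt (by positivity)]
    field_simp
  rw [arcsineDensity, h, sqrt_div' _ (sq_nonneg _), sqrt_sq (by positivity)]
  field_simp

theorem stmt_7 (a b : ℝ) (ha : 0 < a) (hab : a < b) :
    ∫ x in a..b, Real.sqrt (a * b) / (Real.pi * x * Real.sqrt ((b - x) * (x - a))) = 1 := by
  have hb : 0 < b := ha.trans hab
  calc ∫ x in a..b, √(a * b) / (π * x * √((b - x) * (x - a)))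
      = ∫ x in a..b, (x ^ 2)⁻¹ • arcsineDensity b⁻¹ a⁻¹ x⁻¹ := by
        refine integral_congr fun x hx => ?_
        rw [uIcc_of_le hab.le] at hx
        exact sqrt_mul_div_eq_inv_sq_mul_arcsineDensity ha hb (ha.trans_le hx.1)
    _ = ∫ u in b⁻¹..a⁻¹, arcsineDensity b⁻¹ a⁻¹ u := integral_inv_sq_smul_comp_inv _ ha hab.le
    _ = 1 := integral_arcsineDensity ((inv_lt_inv₀ hb ha).2 hab)
end

section
/- Let 0 < a < b, c = (b−a)/2, and m = (a+b)/2. Then ∫_a^b (m−x)·x/(π·√((b−x)(x−a))) dx = −c²/2. -/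
/-! With `m = (a + b) / 2` and `c = (b - a) / 2` one has `(b - x) (x - a) = c² - (x - m)²`, so
`x ↦ ((x + m) / 2) √((b - x) (x - a)) - (c² / 2) arcsin ((x - m) / c)` is an antiderivative of
`(m - x) x / √((b - x) (x - a))` on `(a, b)`. The square root vanishes at both endpoints, and
`arcsin` increases by `π` from `a` to `b`, which gives `-π c² / 2` before dividing by `π`. -/

open Real Set MeasureTheory intervalIntegral

section

variable {a b x : ℝ}

lemma sub_mul_sub_eq_sq_sub_sq (a b x : ℝ) :
    (b - x) * (x - a) = ((b - a) / 2) ^ 2 - (x - (a + b) / 2) ^ 2 := by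
  ring

lemma sub_mul_sub_pos (hx : x ∈ Ioo a b) : 0 < (b - x) * (x - a) :=
  mul_pos (sub_pos.2 hx.2) (sub_pos.2 hx.1)

lemma hasDerivAt_sqrt_sub_mul_sub (hx : x ∈ Ioo a b) :
    HasDerivAt (fun y => √((b - y) * (y - a)))
      (((a + b) / 2 - x) / √((b - x) * (x - a))) x := by
  have hinner : HasDerivAt (fun y => (b - y) * (y - a)) (-1 * (x - a) + (b - x) * 1) x :=
    ((hasDerivAt_id x).const_sub b).mul ((hasDerivAt_id x).sub_const a)
  convert hinner.sqrt (sub_mul_sub_pos hx).ne' using 1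
  field_simp
  ring

lemma hasDerivAt_arcsin_sub_div (hx : x ∈ Ioo a b) :
    HasDerivAt (fun y => arcsin ((y - (a + b) / 2) / ((b - a) / 2)))
      (√((b - x) * (x - a)))⁻¹ x := by
  have hba : 0 < b - a := sub_pos.2 (hx.1.trans hx.2)
  have hc : 0 < (b - a) / 2 := half_pos hba
  have hlo : (x - (a + b) / 2) / ((b - a) / 2) ≠ -1 := by
    rw [Ne, div_eq_iff hc.ne']; linarith [hx.1]
  have hhi : (x - (a + b) / 2) / ((b - a) / 2) ≠ 1 := by
    rw [Ne, div_eq_iff hc.ne']; linarith [hx.2]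
  have hsqrt : √(1 - ((x - (a + b) / 2) / ((b - a) / 2)) ^ 2)
      = √((b - x) * (x - a)) / ((b - a) / 2) := by
    have hsq : 1 - ((x - (a + b) / 2) / ((b - a) / 2)) ^ 2
        = (b - x) * (x - a) / ((b - a) / 2) ^ 2 := by
      rw [sub_mul_sub_eq_sq_sub_sq]; field_simp
    rw [hsq, sqrt_div' _ (sq_nonneg _), sqrt_sq hc.le]
  have hinner : HasDerivAt (fun y => (y - (a + b) / 2) / ((b - a) / 2)) ((b - a) / 2)⁻¹ x := by
    simpa using ((hasDerivAt_id x).sub_const ((a + b) / 2)).div_const ((b - a) / 2)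
  have h := (hasDerivAt_arcsin hlo hhi).comp x hinner
  rw [hsqrt] at h
  refine h.congr_deriv ?_
  have hs : √((b - x) * (x - a)) ≠ 0 := (sqrt_pos.2 (sub_mul_sub_pos hx)).ne'
  field_simp

/-- The integrand is the nonnegative derivative of a function continuous on `[a, b]`. -/
lemma intervalIntegrable_inv_sqrt_sub_mul_sub (hab : a < b) :
    IntervalIntegrable (fun x => (√((b - x) * (x - a)))⁻¹) volume a b := by
  refine intervalIntegrable_deriv_of_nonneg
    (g := fun y => arcsin ((y - (a + b) / 2) / ((b - a) / 2))) (by fun_prop) ?_ fun _ _ => inv_nonneg.2 (sqrt_nonneg _)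
  rw [min_eq_left hab.le, max_eq_right hab.le]
  exact fun x hx => hasDerivAt_arcsin_sub_div hx

lemma integral_sub_mul_div_sqrt (hab : a < b) :
    ∫ x in a..b, ((a + b) / 2 - x) * x / √((b - x) * (x - a)) = -π * ((b - a) / 2) ^ 2 / 2 := by
  set F : ℝ → ℝ := fun x => (x + (a + b) / 2) / 2 * √((b - x) * (x - a))
    - ((b - a) / 2) ^ 2 / 2 * arcsin ((x - (a + b) / 2) / ((b - a) / 2)) with hF
  have hderiv : ∀ x ∈ Ioo a b,
      HasDerivAt F (((a + b) / 2 - x) * x / √((b - x) * (x - a))) x := by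
    intro x hx
    have hlin : HasDerivAt (fun y => (y + (a + b) / 2) / 2) (1 / 2) x :=
      ((hasDerivAt_id x).add_const _).div_const 2
    refine ((hlin.mul (hasDerivAt_sqrt_sub_mul_sub hx)).sub
      ((hasDerivAt_arcsin_sub_div hx).const_mul _)).congr_deriv ?_
    have hs : √((b - x) * (x - a)) ≠ 0 := (sqrt_pos.2 (sub_mul_sub_pos hx)).ne'
    have hsq : √((b - x) * (x - a)) ^ 2 = (b - x) * (x - a) := sq_sqrt (sub_mul_sub_pos hx).le
    field_simp
    linear_combination 4 * hsq
  have hint : IntervalIntegrable (fun x => ((a + b) / 2 - x) * x / √((b - x) * (x - a)))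
      volume a b := by
    have h := (intervalIntegrable_inv_sqrt_sub_mul_sub hab).continuousOn_mul
      (g := fun x => ((a + b) / 2 - x) * x) (by fun_prop)
    simpa only [div_eq_mul_inv, mul_comm] using h
  rw [integral_eq_sub_of_hasDerivAt_of_le hab.le (by fun_prop) hderiv hint]
  have hc : (b - a) / 2 ≠ 0 := (half_pos (sub_pos.2 hab)).ne'
  have hb : (b - (a + b) / 2) / ((b - a) / 2) = 1 := by rw [div_eq_one_iff_eq hc]; ring
  have ha : (a - (a + b) / 2) / ((b - a) / 2) = -1 := by rw [div_eq_iff hc]; ring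
  simp only [hF, hb, ha, sub_self, zero_mul, mul_zero, sqrt_zero, arcsin_one, arcsin_neg]
  ring

end

theorem stmt_9_general (a b c m : ℝ) (hab : a < b)
    (hc : c = (b - a) / 2) (hm : m = (a + b) / 2) :
    ∫ x in a..b, (m - x) * x / (Real.pi * Real.sqrt ((b - x) * (x - a))) = -c ^ 2 / 2 := by
  subst hc hm
  simp_rw [mul_comm π, ← div_div]
  rw [intervalIntegral.integral_div, integral_sub_mul_div_sqrt hab]
  field_simp

theorem stmt_9 (a b c m : ℝ) (ha : 0 < a) (hab : a < b)
    (hc : c = (b - a) / 2) (hm : m = (a + b) / 2) :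
    ∫ x in a..b, (m - x) * x / (Real.pi * Real.sqrt ((b - x) * (x - a))) = -c ^ 2 / 2 :=
  stmt_9_general a b c m hab hc hm
end

section
/- Let 0 < a < b. Then ∫_a^b √(ab)·x/(π·x·√((b−x)(x−a))) dx = √(ab), i.e., the measure with density √(ab)/(π·x·√((b−x)(x−a))) on [a,b] has expectation √(ab). -/
/-!
The factor `x` cancels, so the claim reduces to the arcsine-law normalisation
`∫_a^b dx / √((b - x)(x - a)) = π`. An antiderivative is `arcsin ((2x - a - b)/(b - a))`, which
runs from `-π/2` to `π/2`; its derivative is nonnegative, so the singular integrand is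
automatically integrable.
-/

open Real Set intervalIntegral

lemma hasDerivAt_arcsin_two_mul_sub_div {a b x : ℝ} (hax : a < x) (hxb : x < b) :
    HasDerivAt (fun x => arcsin ((2 * x - a - b) / (b - a)))
      (1 / √((b - x) * (x - a))) x := by
  have hba : 0 < b - a := by linarith
  set u := (2 * x - a - b) / (b - a) with hu
  have hu_lt : u < 1 := by rw [hu, div_lt_one hba]; linarith
  have hu_gt : -1 < u := by rw [hu, lt_div_iff₀ hba]; linarith
  have hlin : HasDerivAt (fun x : ℝ => (2 * x - a - b) / (b - a)) (2 / (b - a)) x := by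
    simpa using ((((hasDerivAt_id x).const_mul 2).sub_const a).sub_const b).div_const (b - a)
  have hsqrt : √(1 - u ^ 2) = 2 * √((b - x) * (x - a)) / (b - a) := by
    have : 1 - u ^ 2 = 2 ^ 2 * ((b - x) * (x - a)) / (b - a) ^ 2 := by
      rw [hu]; field_simp; ring
    rw [this, sqrt_div' _ (by positivity), sqrt_mul (by positivity), sqrt_sq zero_le_two,
      sqrt_sq hba.le]
  refine ((hasDerivAt_arcsin hu_gt.ne' hu_lt.ne).comp x hlin).congr_deriv ?_
  rw [hsqrt]
  field_simp

theorem integral_one_div_sqrt_sub_mul_sub {a b : ℝ} (hab : a < b) :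
    ∫ x in a..b, 1 / √((b - x) * (x - a)) = π := by
  have hcont : ContinuousOn (fun x => arcsin ((2 * x - a - b) / (b - a))) (uIcc a b) :=
    continuous_arcsin.comp_continuousOn (by fun_prop)
  have hderiv : ∀ x ∈ Ioo (min a b) (max a b),
      HasDerivAt (fun x => arcsin ((2 * x - a - b) / (b - a))) (1 / √((b - x) * (x - a))) x := by
    rw [min_eq_left hab.le, max_eq_right hab.le]
    exact fun x hx => hasDerivAt_arcsin_two_mul_sub_div hx.1 hx.2
  rw [integral_eq_sub_of_hasDerivAt_of_le hab.le (uIcc_of_le hab.le ▸ hcont)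
    (by simpa [hab.le] using hderiv)
    (intervalIntegrable_deriv_of_nonneg hcont hderiv fun _ _ => by positivity)]
  have hba : b - a ≠ 0 := by linarith
  have h_at_b : (2 * b - a - b) / (b - a) = 1 := by rw [div_eq_one_iff_eq hba]; ring
  have h_at_a : (2 * a - a - b) / (b - a) = -1 := by rw [div_eq_iff hba]; ring
  simp only [h_at_b, h_at_a, arcsin_one, arcsin_neg]
  ring

theorem stmt_10 (a b : ℝ) (ha : 0 < a) (hab : a < b) :
    ∫ x in a..b, Real.sqrt (a * b) * x / (Real.pi * x * Real.sqrt ((b - x) * (x - a)))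
      = Real.sqrt (a * b) := by
  have hcancel : EqOn (fun x => √(a * b) * x / (π * x * √((b - x) * (x - a))))
      (fun x => √(a * b) / π * (1 / √((b - x) * (x - a)))) (uIcc a b) := by
    intro x hx
    have hx : x ≠ 0 := (ha.trans_le (uIcc_of_le hab.le ▸ hx).1).ne'
    field_simp
  rw [integral_congr hcancel, integral_const_mul, integral_one_div_sqrt_sub_mul_sub hab]
  field_simp
end

section
/- Let 0 < a < b and suppose y ≤ a. Then ∫_a^b log|y−x|/(π·√((b−x)(x−a))) dx = 2·log((√(a−y)+√(b−y))/2). -/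
/-!
The substitution `x = (a + b) / 2 + (b - a) / 2 * cos θ` turns the arcsine density on `[a, b]`
into `dθ / π` on `[0, π]`. With `p = (√(a - y) + √(b - y)) / 2` and `q = (√(a - y) - √(b - y)) / 2`
one has `x - y = |p e^{iθ} - q|²`, and since `|q| ≤ p` the mean of `log |z - q|` over the circle
`|z| = p` is `log p`.
-/

open Real MeasureTheory intervalIntegral Set

lemma integral_div_sqrt_eq_integral_comp_cos {a b : ℝ} (hab : a < b) (f : ℝ → ℝ) :
    ∫ x in a..b, f x / √((b - x) * (x - a))
      = ∫ θ in 0..π, f ((a + b) / 2 + (b - a) / 2 * cos θ) := by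
  set r := (b - a) / 2
  have hr : 0 < r := by simp only [r]; linarith
  set g : ℝ → ℝ := fun θ ↦ (a + b) / 2 + r * cos θ
  have hg : g = (r * · + (a + b) / 2) ∘ cos := by ext θ; simp [g, add_comm]
  have himage : g '' Ioo 0 π = Ioo a b := by
    have hcos : cos '' Ioo 0 π = Ioo (-1) 1 := cosPartialHomeomorph.image_source_eq_target
    rw [hg, image_comp, hcos, image_affine_Ioo hr]
    congr 1 <;> simp only [r] <;> ring
  have hinj : InjOn g (Ioo 0 π) := by
    rw [hg]
    have haff : Function.Injective (r * · + (a + b) / 2) := fun x y h ↦ by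
      simpa [hr.ne'] using h
    exact haff.comp_injOn (injOn_cos.mono Ioo_subset_Icc_self)
  have hderiv : ∀ θ ∈ Ioo 0 π, HasDerivWithinAt g (-(r * sin θ)) (Ioo 0 π) θ := fun θ _ ↦ by
    simpa only [mul_neg] using
      (((hasDerivAt_cos θ).const_mul r).const_add ((a + b) / 2)).hasDerivWithinAt
  rw [integral_of_le hab.le, integral_Ioc_eq_integral_Ioo, ← himage,
    integral_image_eq_integral_abs_deriv_smul measurableSet_Ioo hderiv hinj,
    integral_of_le pi_pos.le, integral_Ioc_eq_integral_Ioo]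
  refine setIntegral_congr_fun measurableSet_Ioo fun θ hθ ↦ ?_
  have hrsin : 0 < r * sin θ := mul_pos hr (sin_pos_of_pos_of_lt_pi hθ.1 hθ.2)
  have hsqrt : √((b - g θ) * (g θ - a)) = r * sin θ := by
    rw [← sqrt_sq hrsin.le]
    congr 1
    simp only [g, r]
    linear_combination (-((b - a) / 2) ^ 2) * sin_sq_add_cos_sq θ
  rw [smul_eq_mul, abs_neg, abs_of_pos hrsin, hsqrt, mul_div_cancel₀ _ hrsin.ne']

lemma integral_zero_two_pi_comp_cos {E : Type*} [NormedAddCommGroup E] [NormedSpace ℝ E]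
    {g : ℝ → E} (hg : IntervalIntegrable (fun θ ↦ g (cos θ)) volume 0 (2 * π)) :
    ∫ θ in 0..2 * π, g (cos θ) = 2 • ∫ θ in 0..π, g (cos θ) := by
  have hsymm : ∫ θ in π..2 * π, g (cos θ) = ∫ θ in 0..π, g (cos θ) := by
    have := integral_comp_sub_left (fun θ ↦ g (cos θ)) (2 * π) (a := 0) (b := π)
    simp only [cos_two_pi_sub, sub_zero] at this
    rw [this, show 2 * π - π = π by ring]
  have hπ := pi_pos
  rw [← integral_add_adjacent_intervals (hg.mono_set ?_) (hg.mono_set ?_), hsymm, two_nsmul]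
  all_goals
    rw [uIcc_of_le (by linarith), uIcc_of_le (by linarith)]
    exact Icc_subset_Icc (by linarith) (by linarith)

lemma sq_norm_circleMap_zero_sub_ofReal (p q θ : ℝ) :
    ‖circleMap 0 p θ - q‖ ^ 2 = p ^ 2 - 2 * p * q * cos θ + q ^ 2 := by
  rw [Complex.sq_norm, circleMap, Complex.normSq_apply]
  simp only [zero_add, Complex.sub_re, Complex.re_ofReal_mul, Complex.exp_ofReal_mul_I_re,
    Complex.ofReal_re, Complex.sub_im, Complex.im_ofReal_mul, Complex.exp_ofReal_mul_I_im,
    Complex.ofReal_im, sub_zero]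
  linear_combination p ^ 2 * sin_sq_add_cos_sq θ

lemma integral_log_sq_sub_two_mul_mul_cos_add_sq {p q : ℝ} (hqp : |q| ≤ p) :
    ∫ θ in 0..π, log (p ^ 2 - 2 * p * q * cos θ + q ^ 2) = 2 * π * log p := by
  have hnorm : ∀ θ, log (p ^ 2 - 2 * p * q * cos θ + q ^ 2)
      = 2 * log ‖circleMap 0 p θ - q‖ := fun θ ↦ by
    rw [← sq_norm_circleMap_zero_sub_ofReal, log_pow, Nat.cast_ofNat]
  have hint : CircleIntegrable (log ‖· - (q : ℂ)‖) 0 p := circleIntegrable_log_norm_sub_const p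
  have havg := circleAverage_log_norm_sub_const_of_mem_closedBall (c := 0) (R := p) (a := q)
    (by simpa using hqp.trans (le_abs_self p))
  rw [circleAverage_def, smul_eq_mul] at havg
  calc ∫ θ in 0..π, log (p ^ 2 - 2 * p * q * cos θ + q ^ 2)
      = (∫ θ in 0..2 * π, log (p ^ 2 - 2 * p * q * cos θ + q ^ 2)) / 2 := by
        rw [integral_zero_two_pi_comp_cos (g := fun c ↦ log (p ^ 2 - 2 * p * q * c + q ^ 2))
          (by simpa only [hnorm] using hint.const_mul 2), nsmul_eq_mul]
        ring
    _ = ∫ θ in 0..2 * π, log ‖circleMap 0 p θ - q‖ := by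
        simp_rw [hnorm]
        rw [intervalIntegral.integral_const_mul]
        ring
    _ = 2 * π * log p := by
        rw [← havg]
        field_simp

theorem stmt_11_general (a b y : ℝ) (hab : a < b) (hy : y ≤ a) :
    ∫ x in a..b, Real.log |y - x| / (Real.pi * Real.sqrt ((b - x) * (x - a)))
      = 2 * Real.log ((Real.sqrt (a - y) + Real.sqrt (b - y)) / 2) := by
  set u := √(a - y)
  set v := √(b - y)
  have hu : u ^ 2 = a - y := sq_sqrt (by linarith)
  have hv : v ^ 2 = b - y := sq_sqrt (by linarith)
  have hlog : ∀ θ, log |y - ((a + b) / 2 + (b - a) / 2 * cos θ)|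
      = log (((u + v) / 2) ^ 2 - 2 * ((u + v) / 2) * ((u - v) / 2) * cos θ + ((u - v) / 2) ^ 2) :=
    fun θ ↦ by
      rw [log_abs, ← log_neg_eq_log]
      congr 1
      linear_combination ((cos θ - 1) / 2) * hu - ((1 + cos θ) / 2) * hv
  have hqp : |(u - v) / 2| ≤ (u + v) / 2 := by
    rw [abs_le]; constructor <;> linarith [sqrt_nonneg (a - y), sqrt_nonneg (b - y)]
  simp_rw [div_mul_eq_div_div_swap]
  rw [intervalIntegral.integral_div, integral_div_sqrt_eq_integral_comp_cos hab]
  simp_rw [hlog]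
  rw [integral_log_sq_sub_two_mul_mul_cos_add_sq hqp]
  field_simp

theorem stmt_11 (a b y : ℝ) (ha : 0 < a) (hab : a < b) (hy : y ≤ a) :
    ∫ x in a..b, Real.log |y - x| / (Real.pi * Real.sqrt ((b - x) * (x - a)))
      = 2 * Real.log ((Real.sqrt (a - y) + Real.sqrt (b - y)) / 2) :=
  stmt_11_general a b y hab hy
end

section
/- Let 0 < a < b, m = (a+b)/2, and suppose y ≤ a. Then ∫_a^b (m−x)·log|y−x|/(π·√((b−x)(x−a))) dx = √(a−y)·√(b−y) + y − m. In particular, taking y = 0 gives the value √(ab) − m. -/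
/-!
Substituting `x = m + c sin θ`, `c = (b - a) / 2`, turns the arcsine weight into `dθ / π`, and the
integral becomes `-(1/π) ∫_{-π/2}^{π/2} c sin θ log (A + c sin θ) dθ` with `A = m - y ≥ c`. This
has an elementary antiderivative, whose increment is `π (A - √(A² - c²))`, and
`A² - c² = (a - y) (b - y)`. When `y = a` the integrand has a logarithmic singularity at `θ = -π/2`;
it is still bounded below, which is enough for the fundamental theorem of calculus.
-/

open Real Set MeasureTheory intervalIntegral

theorem integral_eq_sub_of_hasDerivAt_of_le_of_bddBelow {g g' : ℝ → ℝ} {a b K : ℝ} (hab : a ≤ b)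
    (hcont : ContinuousOn g (Icc a b)) (hderiv : ∀ x ∈ Ioo a b, HasDerivAt g (g' x) x)
    (hK : ∀ x ∈ Ioo a b, K ≤ g' x) : ∫ x in a..b, g' x = g b - g a := by
  have hshift : IntervalIntegrable (fun x => g' x - K) volume a b := by
    refine intervalIntegrable_deriv_of_nonneg (g := fun x => g x - K * x) ?_ ?_ ?_
    · rw [uIcc_of_le hab]; fun_prop
    · rw [min_eq_left hab, max_eq_right hab]
      intro x hx
      simpa using (hderiv x hx).fun_sub ((hasDerivAt_id' x).const_mul K)
    · rw [min_eq_left hab, max_eq_right hab]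
      exact fun x hx => sub_nonneg.2 (hK x hx)
  refine integral_eq_sub_of_hasDerivAt_of_le hab hcont hderiv ?_
  simpa using hshift.add (intervalIntegrable_const (c := K))

theorem integral_comp_add_mul_sin {E : Type*} [NormedAddCommGroup E] [NormedSpace ℝ E]
    (f : ℝ → E) {m c : ℝ} (hc : 0 < c) :
    ∫ x in (m - c)..(m + c), f x = ∫ θ in (-(π / 2))..(π / 2), (c * cos θ) • f (m + c * sin θ) := by
  have himage : (fun θ => m + c * sin θ) '' Ioo (-(π / 2)) (π / 2) = Ioo (m - c) (m + c) := by
    have hsin : sin '' Ioo (-(π / 2)) (π / 2) = Ioo (-1) 1 :=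
      sinPartialHomeomorph.image_source_eq_target
    rw [show (fun θ => m + c * sin θ) = (c * · + m) ∘ sin by ext; simp [add_comm],
      image_comp, hsin, image_affine_Ioo hc]
    congr 1 <;> ring
  have hinj : InjOn (fun θ => m + c * sin θ) (Ioo (-(π / 2)) (π / 2)) := fun θ hθ θ' hθ' h =>
    injOn_sin (Ioo_subset_Icc_self hθ) (Ioo_subset_Icc_self hθ')
      (mul_left_cancel₀ hc.ne' (add_left_cancel h))
  have hpi := pi_pos
  rw [integral_of_le (by linarith), integral_Ioc_eq_integral_Ioo, ← himage,
    integral_image_eq_integral_abs_deriv_smul measurableSet_Ioo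
      (fun θ _ => (((hasDerivAt_sin θ).const_mul c).const_add m).hasDerivWithinAt) hinj,
    integral_of_le (by linarith), integral_Ioc_eq_integral_Ioo]
  refine setIntegral_congr_fun measurableSet_Ioo fun θ hθ => ?_
  simp only [abs_of_pos (mul_pos hc (cos_pos_of_mem_Ioo hθ))]

theorem hasDerivAt_mul_arctan_tan_half {A c θ : ℝ} (hcA : |c| ≤ A) (hθ : cos (θ / 2) ≠ 0) :
    HasDerivAt (fun θ => 2 * √(A ^ 2 - c ^ 2) * arctan ((A * tan (θ / 2) + c) / √(A ^ 2 - c ^ 2)))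
      ((A ^ 2 - c ^ 2) / (A + c * sin θ)) θ := by
  have hcA2 : 0 ≤ A ^ 2 - c ^ 2 := by nlinarith [abs_nonneg c, sq_abs c]
  generalize hr_def : √(A ^ 2 - c ^ 2) = r
  have hr0 : 0 ≤ r := hr_def ▸ sqrt_nonneg _
  have hr2 : r ^ 2 = A ^ 2 - c ^ 2 := hr_def ▸ sq_sqrt hcA2
  rw [← hr2]
  rcases hr0.eq_or_lt with rfl | hr
  · simpa using hasDerivAt_const θ (0 : ℝ)
  have htan : HasDerivAt (fun θ => tan (θ / 2)) (1 / cos (θ / 2) ^ 2 * (1 / 2)) θ := by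
    simpa [Function.comp_def] using (hasDerivAt_tan hθ).comp θ ((hasDerivAt_id θ).div_const 2)
  refine (((((htan.const_mul A).add_const c).div_const r).arctan).const_mul (2 * r)).congr_deriv ?_
  have hkey : cos (θ / 2) ^ 2 * (r ^ 2 + (A * tan (θ / 2) + c) ^ 2) = A * (A + c * sin θ) := by
    rw [tan_eq_sin_div_cos, show θ = 2 * (θ / 2) by ring, sin_two_mul]
    field_simp
    linear_combination A ^ 2 * sin_sq_add_cos_sq (θ / 2) + cos (θ / 2) ^ 2 * hr2
  have hu : A + c * sin θ ≠ 0 := by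
    intro h
    rw [h, mul_zero] at hkey
    have : 0 < cos (θ / 2) ^ 2 * (r ^ 2 + (A * tan (θ / 2) + c) ^ 2) := by positivity
    exact this.ne' hkey
  field_simp
  linear_combination -hkey

/-- Integration by parts, then `∫ dθ / (A + c sin θ)` by the substitution `t = tan (θ / 2)`. -/
noncomputable def sinMulLogAntideriv (A c θ : ℝ) : ℝ :=
  A * θ - c * cos θ * (log (A + c * sin θ) - 1)
    - 2 * √(A ^ 2 - c ^ 2) * arctan ((A * tan (θ / 2) + c) / √(A ^ 2 - c ^ 2))

theorem hasDerivAt_sinMulLogAntideriv {A c θ : ℝ} (hcA : |c| ≤ A) (hθ : cos (θ / 2) ≠ 0)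
    (hu : A + c * sin θ ≠ 0) :
    HasDerivAt (sinMulLogAntideriv A c) (c * sin θ * log (A + c * sin θ)) θ := by
  have hlog : HasDerivAt (fun θ => log (A + c * sin θ)) (c * cos θ / (A + c * sin θ)) θ :=
    (((hasDerivAt_sin θ).const_mul c).const_add A).log hu
  refine ((((hasDerivAt_id θ).const_mul A).sub
    (((hasDerivAt_cos θ).const_mul c).mul (hlog.sub_const 1))).sub
    (hasDerivAt_mul_arctan_tan_half hcA hθ)).congr_deriv ?_
  field_simp
  linear_combination (-c ^ 2) * sin_sq_add_cos_sq θ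

theorem continuousOn_cos_mul_log_add_mul_sin {A c : ℝ} (hc : 0 < c) (hcA : c ≤ A) :
    ContinuousOn (fun θ => cos θ * log (A + c * sin θ)) (Icc (-(π / 2)) (π / 2)) := by
  rcases hcA.eq_or_lt with rfl | hlt
  · -- `log v` blows up at `θ = -π/2`, where `v = c + c sin θ` vanishes, but `cos θ` is a multiple
    -- of `√v` and `√v log v = 2 √v log √v` is continuous
    refine ContinuousOn.congr
      (f := fun θ => √(1 - sin θ) / √c * (2 * (√(c + c * sin θ) * log √(c + c * sin θ))))
      ((by fun_prop : Continuous fun θ => √(1 - sin θ) / √c).mul (continuous_const.mul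
        (continuous_mul_log.comp (by fun_prop : Continuous fun θ => √(c + c * sin θ))))).continuousOn
      fun θ hθ => ?_
    have hcos : cos θ = √(1 - sin θ) * √(1 + sin θ) := by
      rw [← sqrt_mul (by linarith [sin_le_one θ]), ← sqrt_sq (cos_nonneg_of_mem_Icc hθ), cos_sq']
      ring_nf
    have hv : 0 ≤ c + c * sin θ := by nlinarith [neg_one_le_sin θ]
    have hsc : √c ≠ 0 := (sqrt_pos.2 hc).ne'
    beta_reduce
    rw [log_sqrt hv, show c + c * sin θ = c * (1 + sin θ) by ring, sqrt_mul hc.le, hcos]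
    field_simp
  · have hu : ∀ θ, A + c * sin θ ≠ 0 := fun θ => by nlinarith [neg_one_le_sin θ]
    exact (continuous_cos.mul
      ((continuous_const.add (continuous_const.mul continuous_sin)).log hu)).continuousOn

theorem continuousOn_sinMulLogAntideriv {A c : ℝ} (hc : 0 < c) (hcA : c ≤ A) :
    ContinuousOn (sinMulLogAntideriv A c) (Icc (-(π / 2)) (π / 2)) := by
  have htan : ContinuousOn (fun θ => tan (θ / 2)) (Icc (-(π / 2)) (π / 2)) :=
    continuousOn_tan.comp (continuous_id.div_const 2).continuousOn fun θ hθ =>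
      (cos_pos_of_mem_Ioo ⟨by linarith [hθ.1, pi_pos], by linarith [hθ.2, pi_pos]⟩).ne'
  have hcoslog := continuousOn_cos_mul_log_add_mul_sin hc hcA
  unfold sinMulLogAntideriv
  simp_rw [mul_assoc c, mul_sub, mul_one]
  fun_prop

theorem sinMulLogAntideriv_sub {A c : ℝ} (hcA : |c| ≤ A) :
    sinMulLogAntideriv A c (π / 2) - sinMulLogAntideriv A c (-(π / 2)) =
      π * (A - √(A ^ 2 - c ^ 2)) := by
  have hcA2 : 0 ≤ A ^ 2 - c ^ 2 := by nlinarith [abs_nonneg c, sq_abs c]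
  generalize hr_def : √(A ^ 2 - c ^ 2) = r
  have hr0 : 0 ≤ r := hr_def ▸ sqrt_nonneg _
  have hr2 : r ^ 2 = A ^ 2 - c ^ 2 := hr_def ▸ sq_sqrt hcA2
  simp only [sinMulLogAntideriv, hr_def, cos_pi_div_two, cos_neg, sin_pi_div_two, sin_neg,
    neg_div, tan_neg, show π / 2 / 2 = π / 4 by ring, tan_pi_div_four, mul_zero, zero_mul,
    mul_one, mul_neg, sub_zero]
  rcases hr0.eq_or_lt with rfl | hr
  · ring
  have hAc : 0 < A + c := by nlinarith [neg_abs_le c, le_abs_self c]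
  have hinv : (-A + c) / r = -((A + c) / r)⁻¹ := by
    field_simp
    linear_combination hr2
  rw [hinv, arctan_neg, arctan_inv_of_pos (div_pos hAc hr)]
  ring

theorem integral_mul_sin_mul_log {A c : ℝ} (hc : 0 < c) (hcA : c ≤ A) :
    ∫ θ in (-(π / 2))..(π / 2), c * sin θ * log (A + c * sin θ) = π * (A - √(A ^ 2 - c ^ 2)) := by
  have hpi := pi_pos
  have hA : 0 < A := hc.trans_le hcA
  have hu : ∀ θ ∈ Ioo (-(π / 2)) (π / 2), 0 < A + c * sin θ := fun θ hθ => by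
    nlinarith [(mapsTo_sin_Ioo hθ).1]
  rw [← sinMulLogAntideriv_sub (by rwa [abs_of_pos hc])]
  refine integral_eq_sub_of_hasDerivAt_of_le_of_bddBelow (K := -(c * |log A|)) (by linarith)
    (continuousOn_sinMulLogAntideriv hc hcA) (fun θ hθ => ?_) (fun θ hθ => ?_)
  · refine hasDerivAt_sinMulLogAntideriv (by rwa [abs_of_pos hc]) ?_ (hu θ hθ).ne'
    exact (cos_pos_of_mem_Ioo ⟨by linarith [hθ.1], by linarith [hθ.2]⟩).ne'
  · -- `sin θ` and `log (A + c sin θ) - log A` have the same sign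
    have hmono : sin θ * log A ≤ sin θ * log (A + c * sin θ) := by
      rcases le_total 0 (sin θ) with hs | hs
      · exact mul_le_mul_of_nonneg_left (log_le_log hA (by nlinarith)) hs
      · exact mul_le_mul_of_nonpos_left (log_le_log (hu θ hθ) (by nlinarith)) hs
    have hbound : -|log A| ≤ sin θ * log A := by
      refine neg_le_of_abs_le ?_
      rw [abs_mul]
      exact mul_le_of_le_one_left (abs_nonneg _) (abs_sin_le_one θ)
    rw [mul_assoc, ← mul_neg]
    exact mul_le_mul_of_nonneg_left (hbound.trans hmono) hc.le

theorem integral_mul_log_div_sqrt {m c y : ℝ} (hc : 0 < c) (hy : y ≤ m - c) :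
    ∫ x in (m - c)..(m + c), (m - x) * log |y - x| / (π * √((m + c - x) * (x - (m - c)))) =
      √((m - y) ^ 2 - c ^ 2) - (m - y) := by
  have hpi := pi_pos
  have hsubst : EqOn (fun θ => (c * cos θ) • ((m - (m + c * sin θ)) * log |y - (m + c * sin θ)| /
        (π * √((m + c - (m + c * sin θ)) * (m + c * sin θ - (m - c))))))
      (fun θ => -π⁻¹ * (c * sin θ * log (m - y + c * sin θ))) (Ioo (-(π / 2)) (π / 2)) := by
    intro θ hθ
    have hcos := cos_pos_of_mem_Ioo hθ
    have hsqrt : √((m + c - (m + c * sin θ)) * (m + c * sin θ - (m - c))) = c * cos θ := by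
      rw [← sqrt_sq (by positivity : 0 ≤ c * cos θ), mul_pow, cos_sq']
      ring_nf
    have habs : |y - (m + c * sin θ)| = m - y + c * sin θ := by
      rw [abs_sub_comm, abs_of_nonneg (by nlinarith [neg_one_le_sin θ])]
      ring
    simp only [hsqrt, habs, smul_eq_mul]
    field_simp
    ring
  rw [integral_comp_add_mul_sin _ hc, integral_congr_Ioo_of_le (by linarith) hsubst,
    intervalIntegral.integral_const_mul, integral_mul_sin_mul_log hc (by linarith)]
  field_simp
  ring

theorem stmt_12_general (a b m y : ℝ) (hab : a < b) (hm : m = (a + b) / 2)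
    (hy : y ≤ a) :
    ∫ x in a..b, (m - x) * Real.log |y - x| / (Real.pi * Real.sqrt ((b - x) * (x - a)))
      = Real.sqrt (a - y) * Real.sqrt (b - y) + y - m := by
  obtain ⟨c, hc, rfl, rfl⟩ : ∃ c, 0 < c ∧ a = m - c ∧ b = m + c :=
    ⟨(b - a) / 2, by linarith, by linarith, by linarith⟩
  rw [integral_mul_log_div_sqrt hc hy, ← sqrt_mul (by linarith),
    show (m - y) ^ 2 - c ^ 2 = (m - c - y) * (m + c - y) by ring]
  ring

theorem stmt_12 (a b m y : ℝ) (ha : 0 < a) (hab : a < b) (hm : m = (a + b) / 2)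
    (hy : y ≤ a) :
    ∫ x in a..b, (m - x) * Real.log |y - x| / (Real.pi * Real.sqrt ((b - x) * (x - a)))
      = Real.sqrt (a - y) * Real.sqrt (b - y) + y - m :=
  stmt_12_general a b m y hab hm hy
end

section
/- Let 0 < a < b. Then ∫_a^b log(x)·√(ab)/(π·x·√((b−x)(x−a))) dx = log(4ab/(a+b+2√(ab))). -/
/-!
Substitute `x = 2ab / ((a + b) - (b - a) cos θ)`, `θ ∈ (0, π)`: then `1/x` is the Chebyshev
parametrization of `[1/b, 1/a]`, and the weight `√(ab) / (π x √((b - x)(x - a))) dx` becomes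
`dθ / π`. Hence the integral is `log (2ab) - π⁻¹ ∫₀^π log ((a + b) - (b - a) cos θ) dθ`.
Writing `A - B cos θ = |U e^{iθ} - V|²` with `U² + V² = A`, `2UV = B`, `|V| ≤ U`, the mean value
property of the harmonic function `log |z - V|` on the circle of radius `U` gives
`∫₀^{2π} log (A - B cos θ) dθ = 2π log U² = 2π log ((A + √(A² - B²)) / 2)`.
-/

open MeasureTheory Real Set

theorem norm_sq_circleMap_sub_ofReal (U V θ : ℝ) :
    ‖circleMap 0 U θ - V‖ ^ 2 = U ^ 2 + V ^ 2 - 2 * U * V * cos θ := by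
  rw [Complex.sq_norm, Complex.normSq_apply]
  simp only [Complex.sub_re, Complex.sub_im, circleMap_zero_re, circleMap_zero_im,
    Complex.ofReal_re, Complex.ofReal_im]
  linear_combination U ^ 2 * sin_sq_add_cos_sq θ

theorem integral_log_sq_add_sq_sub_mul_cos {U V : ℝ} (hV : |V| ≤ U) :
    ∫ θ in 0..2 * π, log (U ^ 2 + V ^ 2 - 2 * U * V * cos θ) = 2 * π * log (U ^ 2) := by
  have hmean : circleAverage (log ‖· - (V : ℂ)‖) 0 U = log U :=
    circleAverage_log_norm_sub_const_of_mem_closedBall (by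
      simpa [abs_of_nonneg ((abs_nonneg V).trans hV)] using hV)
  rw [circleAverage_def, smul_eq_mul, inv_mul_eq_iff_eq_mul₀ (by positivity)] at hmean
  simp_rw [← norm_sq_circleMap_sub_ofReal, log_pow, intervalIntegral.integral_const_mul, hmean]
  push_cast
  ring

theorem integral_log_sub_mul_cos {A B : ℝ} (hB : |B| ≤ A) :
    ∫ θ in 0..2 * π, log (A - B * cos θ) = 2 * π * log ((A + √(A ^ 2 - B ^ 2)) / 2) := by
  obtain ⟨hAB, hBA⟩ := abs_le.mp hB
  set p := √(A + B)
  set q := √(A - B)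
  have hp : p ^ 2 = A + B := sq_sqrt (by linarith)
  have hq : q ^ 2 = A - B := sq_sqrt (by linarith)
  have hpq : p * q = √(A ^ 2 - B ^ 2) := by
    rw [← sqrt_mul (by linarith)]; ring_nf
  have hUV : |(p - q) / 2| ≤ (p + q) / 2 := by
    rw [abs_le]; constructor <;> linarith [sqrt_nonneg (A + B), sqrt_nonneg (A - B)]
  have hcos (θ : ℝ) : A - B * cos θ
      = ((p + q) / 2) ^ 2 + ((p - q) / 2) ^ 2 - 2 * ((p + q) / 2) * ((p - q) / 2) * cos θ := by
    linear_combination ((cos θ - 1) / 2) * hp - ((cos θ + 1) / 2) * hq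
  have hU : ((p + q) / 2) ^ 2 = (A + √(A ^ 2 - B ^ 2)) / 2 := by
    linear_combination (1 / 4) * hp + (1 / 4) * hq + (1 / 2) * hpq
  simp_rw [hcos, integral_log_sq_add_sq_sub_mul_cos hUV, hU]

theorem integral_comp_cos_zero_two_pi_eq_two_smul {E : Type*} [NormedAddCommGroup E]
    [NormedSpace ℝ E] {f : ℝ → E} (hf : IntervalIntegrable (fun θ => f (cos θ)) volume 0 (2 * π)) :
    ∫ θ in 0..2 * π, f (cos θ) = (2 : ℝ) • ∫ θ in 0..π, f (cos θ) := by
  have hπ : π ∈ uIcc 0 (2 * π) := by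
    rw [uIcc_of_le (by positivity)]; constructor <;> linarith [pi_pos]
  have hreflect : ∫ θ in π..2 * π, f (cos θ) = ∫ θ in 0..π, f (cos θ) := by
    have h :=
      intervalIntegral.integral_comp_sub_left (fun θ => f (cos θ)) (2 * π) (a := 0) (b := π)
    simp only [cos_two_pi_sub, sub_zero, show 2 * π - π = π by ring] at h
    exact h.symm
  rw [← intervalIntegral.integral_add_adjacent_intervals (hf.mono_set (uIcc_subset_uIcc_left hπ))
    (hf.mono_set (uIcc_subset_uIcc_right hπ)), hreflect, two_smul]

lemma continuous_log_sub_mul_cos {A B : ℝ} (hB : |B| < A) :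
    Continuous fun θ => log (A - B * cos θ) := by
  refine (continuous_const.sub (continuous_const.mul continuous_cos)).log fun θ => ?_
  show A - B * cos θ ≠ 0
  have : B * cos θ ≤ |B| := (le_abs_self _).trans <| by
    rw [abs_mul]; exact mul_le_of_le_one_right (abs_nonneg B) (abs_cos_le_one θ)
  linarith

theorem integral_log_sub_mul_cos_zero_pi {A B : ℝ} (hB : |B| < A) :
    ∫ θ in 0..π, log (A - B * cos θ) = π * log ((A + √(A ^ 2 - B ^ 2)) / 2) := by
  have h := integral_comp_cos_zero_two_pi_eq_two_smul (f := fun t => log (A - B * t))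
    ((continuous_log_sub_mul_cos hB).intervalIntegrable 0 (2 * π))
  rw [integral_log_sub_mul_cos hB.le, smul_eq_mul] at h
  linarith

noncomputable def recipCosParam (a b θ : ℝ) : ℝ := 2 * a * b / ((a + b) - (b - a) * cos θ)

section recipCosParam

variable {a b : ℝ}

lemma two_mul_le_add_sub_mul_cos (hab : a ≤ b) (θ : ℝ) : 2 * a ≤ (a + b) - (b - a) * cos θ := by
  nlinarith [cos_le_one θ]

lemma hasDerivAt_recipCosParam (ha : 0 < a) (hab : a ≤ b) (θ : ℝ) :
    HasDerivAt (recipCosParam a b)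
      (-(2 * a * b * ((b - a) * sin θ)) / ((a + b) - (b - a) * cos θ) ^ 2) θ := by
  have hD : (a + b) - (b - a) * cos θ ≠ 0 := by linarith [two_mul_le_add_sub_mul_cos hab θ]
  exact ((hasDerivAt_const θ (2 * a * b)).div
    (((hasDerivAt_cos θ).const_mul (b - a)).const_sub (a + b)) hD).congr_deriv (by ring)

lemma strictAntiOn_recipCosParam (ha : 0 < a) (hab : a < b) :
    StrictAntiOn (recipCosParam a b) (Icc 0 π) := fun θ hθ φ hφ hθφ => by
  have hcos := strictAntiOn_cos hθ hφ hθφ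
  have hb := ha.trans hab
  exact div_lt_div_of_pos_left (by positivity)
    (by linarith [two_mul_le_add_sub_mul_cos hab.le θ]) (by nlinarith)

lemma recipCosParam_zero (ha : a ≠ 0) : recipCosParam a b 0 = b := by
  rw [recipCosParam, cos_zero, show a + b - (b - a) * 1 = 2 * a by ring]
  field_simp

lemma recipCosParam_pi (hb : b ≠ 0) : recipCosParam a b π = a := by
  rw [recipCosParam, cos_pi, show a + b - (b - a) * -1 = 2 * b by ring]
  field_simp

lemma recipCosParam_image_Ioo (ha : 0 < a) (hab : a < b) :
    recipCosParam a b '' Ioo 0 π = Ioo a b := by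
  have hanti := strictAntiOn_recipCosParam ha hab
  refine Subset.antisymm ?_ ?_
  · rintro _ ⟨θ, hθ, rfl⟩
    constructor
    · simpa [recipCosParam_pi (ha.trans hab).ne'] using
        hanti (Ioo_subset_Icc_self hθ) ⟨pi_pos.le, le_rfl⟩ hθ.2
    · simpa [recipCosParam_zero (b := b) ha.ne'] using
        hanti ⟨le_rfl, pi_pos.le⟩ (Ioo_subset_Icc_self hθ) hθ.1
  · have hcont : ContinuousOn (recipCosParam a b) (Icc 0 π) := fun θ _ =>
      (hasDerivAt_recipCosParam ha hab.le θ).continuousAt.continuousWithinAt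
    simpa [recipCosParam_pi (ha.trans hab).ne', recipCosParam_zero (b := b) ha.ne'] using
      intermediate_value_Ioo' pi_pos.le hcont

lemma sqrt_sub_recipCosParam_mul_sub (ha : 0 < a) (hab : a ≤ b) {θ : ℝ} (hθ : 0 ≤ sin θ) :
    √((b - recipCosParam a b θ) * (recipCosParam a b θ - a))
      = √(a * b) * ((b - a) * sin θ) / ((a + b) - (b - a) * cos θ) := by
  have hD := two_mul_le_add_sub_mul_cos hab θ
  have hab' : √(a * b) ^ 2 = a * b := sq_sqrt (by nlinarith)
  have hD0 : (a + b) - (b - a) * cos θ ≠ 0 := by linarith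
  rw [← sqrt_sq (div_nonneg (mul_nonneg (sqrt_nonneg _) (mul_nonneg (by linarith) hθ))
    (by linarith))]
  congr 1
  rw [recipCosParam, div_pow, mul_pow, hab']
  field_simp
  linear_combination (-b * (b - a) ^ 2) * sin_sq_add_cos_sq θ

lemma abs_deriv_recipCosParam_mul_weight (ha : 0 < a) (hab : a < b) {θ : ℝ} (hθ : θ ∈ Ioo 0 π) :
    |-(2 * a * b * ((b - a) * sin θ)) / ((a + b) - (b - a) * cos θ) ^ 2| *
      (√(a * b) / (π * recipCosParam a b θ *
        √((b - recipCosParam a b θ) * (recipCosParam a b θ - a)))) = π⁻¹ := by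
  have hsin := sin_pos_of_mem_Ioo hθ
  have hD := two_mul_le_add_sub_mul_cos hab.le θ
  have hb : 0 < b := ha.trans hab
  have hba : 0 < b - a := sub_pos.mpr hab
  have hab' : 0 < √(a * b) := sqrt_pos.mpr (by positivity)
  rw [sqrt_sub_recipCosParam_mul_sub ha hab.le hsin.le, recipCosParam, abs_div, abs_neg,
    abs_of_pos (by positivity), abs_of_pos (by nlinarith)]
  field_simp [(show (a + b) - (b - a) * cos θ ≠ 0 by linarith)]

theorem integral_mul_weight_eq_integral_recipCosParam (g : ℝ → ℝ) (ha : 0 < a) (hab : a < b) :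
    ∫ x in a..b, g x * √(a * b) / (π * x * √((b - x) * (x - a)))
      = π⁻¹ * ∫ θ in 0..π, g (recipCosParam a b θ) := by
  rw [intervalIntegral.integral_of_le hab.le, intervalIntegral.integral_of_le pi_pos.le,
    integral_Ioc_eq_integral_Ioo, integral_Ioc_eq_integral_Ioo, ← recipCosParam_image_Ioo ha hab,
    integral_image_eq_integral_abs_deriv_smul measurableSet_Ioo
      (fun θ _ => (hasDerivAt_recipCosParam ha hab.le θ).hasDerivWithinAt)
      ((strictAntiOn_recipCosParam ha hab).injOn.mono Ioo_subset_Icc_self),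
    ← integral_const_mul]
  refine setIntegral_congr_fun measurableSet_Ioo fun θ hθ => ?_
  rw [smul_eq_mul, mul_div_assoc, mul_left_comm, abs_deriv_recipCosParam_mul_weight ha hab hθ,
    mul_comm]

end recipCosParam

theorem stmt_13 (a b : ℝ) (ha : 0 < a) (hab : a < b) :
    ∫ x in a..b, Real.log x * Real.sqrt (a * b) / (Real.pi * x * Real.sqrt ((b - x) * (x - a)))
      = Real.log (4 * a * b / (a + b + 2 * Real.sqrt (a * b))) := by
  have hb : 0 < b := ha.trans hab
  have hB : |b - a| < a + b := by rw [abs_of_pos (sub_pos.mpr hab)]; linarith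
  have hdisc : √((a + b) ^ 2 - (b - a) ^ 2) = 2 * √(a * b) := by
    rw [show (a + b) ^ 2 - (b - a) ^ 2 = 2 ^ 2 * (a * b) by ring, sqrt_mul (by positivity),
      sqrt_sq zero_le_two]
  have hlog : ∫ θ in 0..π, log (recipCosParam a b θ)
      = ∫ θ in 0..π, (log (2 * a * b) - log ((a + b) - (b - a) * cos θ)) :=
    intervalIntegral.integral_congr fun θ _ =>
      log_div (by positivity) (by linarith [two_mul_le_add_sub_mul_cos hab.le θ])
  rw [integral_mul_weight_eq_integral_recipCosParam log ha hab, hlog,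
    intervalIntegral.integral_sub intervalIntegrable_const
      ((continuous_log_sub_mul_cos hB).intervalIntegrable 0 π),
    intervalIntegral.integral_const, integral_log_sub_mul_cos_zero_pi hB, hdisc, sub_zero,
    smul_eq_mul, ← mul_sub, inv_mul_cancel_left₀ pi_ne_zero,
    ← log_div (by positivity) (by positivity)]
  congr 1
  field_simp
  ring
end

section
/- Let 0 < a < b. Then ∫_a^b log(x)/(π·√((b−x)(x−a))) dx = log((a+b+2√(ab))/4). -/
/-!
The substitution `x = (b - a)/2 · cos θ + (a + b)/2` turns the arcsine weight
`dx / (π √((b - x)(x - a)))` into `dθ / π` on `[0, π]`. Writing `u = (√b - √a)/2` and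
`v = (√a + √b)/2`, the new integrand is `log (u² + v² + 2uv cos θ) = 2 log |u + v e^{iθ}|`,
and since `|u| ≤ v` the mean of `log |z|` over the circle of centre `u` and radius `v` is
`log v` (Jensen). Hence the integral is `2 log v = log ((a + b + 2√(ab))/4)`.
-/

open Real MeasureTheory Set

/- No integrability is needed: both sides are set integrals related by the measure-theoretic
change of variables, so they take junk values together. -/
theorem integral_eq_integral_mul_sin_smul_comp_cos {E : Type*} [NormedAddCommGroup E]
    [NormedSpace ℝ E] {a b : ℝ} (hab : a < b) (g : ℝ → E) :
    ∫ x in a..b, g x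
      = ∫ θ in 0..π, ((b - a) / 2 * sin θ) • g ((b - a) / 2 * cos θ + (a + b) / 2) := by
  set f : ℝ → ℝ := fun θ => (b - a) / 2 * cos θ + (a + b) / 2
  have hq : 0 < (b - a) / 2 := by linarith
  have himage : f '' Icc 0 π = Icc a b := by
    rw [show f = (fun t => (b - a) / 2 * t + (a + b) / 2) ∘ cos from rfl, image_comp,
      bijOn_cos.image_eq, image_affine_Icc' hq]
    congr 1 <;> ring
  have hinj : InjOn f (Icc 0 π) :=
    ((add_left_injective _).comp (mul_right_injective₀ hq.ne')).comp_injOn injOn_cos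
  have hderiv : ∀ θ ∈ Icc 0 π, HasDerivWithinAt f ((b - a) / 2 * -sin θ) (Icc 0 π) θ :=
    fun θ _ => (((hasDerivAt_cos θ).const_mul _).add_const _).hasDerivWithinAt
  calc ∫ x in a..b, g x = ∫ x in f '' Icc 0 π, g x := by
        rw [intervalIntegral.integral_of_le hab.le, himage, integral_Icc_eq_integral_Ioc]
    _ = ∫ θ in Icc 0 π, |(b - a) / 2 * -sin θ| • g (f θ) :=
        integral_image_eq_integral_abs_deriv_smul measurableSet_Icc hderiv hinj g
    _ = ∫ θ in Icc 0 π, ((b - a) / 2 * sin θ) • g (f θ) := by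
        refine setIntegral_congr_fun measurableSet_Icc fun θ hθ => ?_
        rw [abs_mul, abs_neg, abs_of_pos hq, abs_of_nonneg (sin_nonneg_of_mem_Icc hθ)]
    _ = _ := by
        rw [intervalIntegral.integral_of_le pi_pos.le, integral_Icc_eq_integral_Ioc]

theorem integral_div_pi_mul_sqrt_eq_integral_comp_cos {a b : ℝ} (hab : a < b) (h : ℝ → ℝ) :
    ∫ x in a..b, h x / (π * √((b - x) * (x - a)))
      = (∫ θ in 0..π, h ((b - a) / 2 * cos θ + (a + b) / 2)) / π := by
  rw [integral_eq_integral_mul_sin_smul_comp_cos hab, ← intervalIntegral.integral_div]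
  refine intervalIntegral.integral_congr_Ioo_of_le pi_pos.le fun θ hθ => ?_
  have hsin := sin_pos_of_pos_of_lt_pi hθ.1 hθ.2
  have hba : b - a ≠ 0 := sub_ne_zero.mpr hab.ne'
  have hsqrt : √((b - ((b - a) / 2 * cos θ + (a + b) / 2)) *
      ((b - a) / 2 * cos θ + (a + b) / 2 - a)) = (b - a) / 2 * sin θ := by
    rw [← sqrt_sq (by positivity : 0 ≤ (b - a) / 2 * sin θ)]
    congr 1
    linear_combination (-((b - a) / 2) ^ 2) * sin_sq_add_cos_sq θ
  simp only [smul_eq_mul, hsqrt]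
  field_simp

theorem intervalIntegral.integral_zero_two_mul_eq_two_smul_of_symm {E : Type*}
    [NormedAddCommGroup E] [NormedSpace ℝ E] {f : ℝ → E} {T : ℝ} (hf : ∀ x, f (2 * T - x) = f x)
    (hint : IntervalIntegrable f volume 0 (2 * T)) :
    ∫ x in 0..2 * T, f x = (2 : ℝ) • ∫ x in 0..T, f x := by
  have hT : T ∈ uIcc 0 (2 * T) := by
    rw [mem_uIcc]; rcases le_total 0 T with h | h
    · exact Or.inl ⟨h, by linarith⟩
    · exact Or.inr ⟨by linarith, h⟩
  have hreflect : ∫ x in T..2 * T, f x = ∫ x in 0..T, f x := by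
    have := intervalIntegral.integral_comp_sub_left f (2 * T) (a := 0) (b := T)
    rw [show 2 * T - T = T by ring, sub_zero] at this
    simpa only [hf] using this.symm
  rw [← intervalIntegral.integral_add_adjacent_intervals
    (hint.mono_set (uIcc_subset_uIcc left_mem_uIcc hT))
    (hint.mono_set (uIcc_subset_uIcc hT right_mem_uIcc)), hreflect, two_smul]

theorem norm_sq_circleMap_ofReal (u v θ : ℝ) :
    ‖circleMap u v θ‖ ^ 2 = u ^ 2 + v ^ 2 + 2 * u * v * cos θ := by
  rw [Complex.sq_norm, Complex.normSq_apply]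
  simp [circleMap, Complex.exp_mul_I, ← Complex.ofReal_cos, ← Complex.ofReal_sin]
  linear_combination v ^ 2 * sin_sq_add_cos_sq θ

theorem integral_log_sq_add_sq_add_two_mul_mul_cos {u v : ℝ} (huv : |u| ≤ v) :
    ∫ θ in 0..π, log (u ^ 2 + v ^ 2 + 2 * u * v * cos θ) = 2 * π * log v := by
  have havg := circleAverage_log_norm_sub_const_of_mem_closedBall (a := 0) (c := u) (R := v)
    (by simpa [abs_of_nonneg ((abs_nonneg u).trans huv)] using huv)
  have hsymm : ∀ θ, ‖circleMap u v (2 * π - θ) - 0‖ = ‖circleMap u v θ - 0‖ := by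
    intro θ
    rw [sub_zero, sub_zero, ← sq_eq_sq₀ (norm_nonneg _) (norm_nonneg _),
      norm_sq_circleMap_ofReal, norm_sq_circleMap_ofReal, cos_two_pi_sub]
  rw [circleAverage_def, intervalIntegral.integral_zero_two_mul_eq_two_smul_of_symm
    (fun θ => by simp only [hsymm]) (circleIntegrable_log_norm_sub_const v)] at havg
  simp only [sub_zero, smul_eq_mul] at havg
  calc ∫ θ in 0..π, log (u ^ 2 + v ^ 2 + 2 * u * v * cos θ)
      = ∫ θ in 0..π, 2 * log ‖circleMap u v θ‖ := by
        simp only [← norm_sq_circleMap_ofReal, log_pow, Nat.cast_ofNat]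
    _ = 2 * π * log v := by
        rw [intervalIntegral.integral_const_mul, ← havg]
        field_simp

theorem stmt_14 (a b : ℝ) (ha : 0 < a) (hab : a < b) :
    ∫ x in a..b, Real.log x / (Real.pi * Real.sqrt ((b - x) * (x - a)))
      = Real.log ((a + b + 2 * Real.sqrt (a * b)) / 4) := by
  have hsa := sq_sqrt ha.le
  have hsb := sq_sqrt (ha.trans hab).le
  set u := (√b - √a) / 2 with hu
  set v := (√a + √b) / 2 with hv
  have huv : |u| ≤ v := abs_le.mpr
    ⟨by linarith [sqrt_nonneg a, sqrt_nonneg b], by linarith [sqrt_nonneg a, sqrt_nonneg b]⟩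
  have hcos : ∀ θ, (b - a) / 2 * cos θ + (a + b) / 2 = u ^ 2 + v ^ 2 + 2 * u * v * cos θ :=
    fun θ => by linear_combination (-(1 - cos θ) / 2) * hsa + (-(1 + cos θ) / 2) * hsb
  have hv2 : (a + b + 2 * √(a * b)) / 4 = v ^ 2 := by
    rw [sqrt_mul ha.le]
    linear_combination (-hsa - hsb) / 4
  rw [integral_div_pi_mul_sqrt_eq_integral_comp_cos hab log]
  simp only [hcos]
  rw [integral_log_sq_add_sq_add_two_mul_mul_cos huv, hv2, log_pow, Nat.cast_ofNat]
  field_simp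
end

section
/- Let 0 < a < b, m = (a+b)/2, g = √(ab), and suppose E = (m+g)/2 satisfies E·log E − E = g·log g − g and g·log g = (g − E)·log(E − g). Then (1/2)·log((m²−g²)/4) − (2g²/(m−g)²)·log((m+g)/(2g)) + (3g−m)/(2(m−g)) = 0. -/
/-! Put `E = (m + g) / 2`, so that `m - g = 2 (E - g)`, `(m² - g²) / 4 = E (E - g)` and
`(m + g) / (2g) = E / g`. In these variables the energy is
`((E - g)² log (E (E - g)) - g² log (E / g) + (2g - E)(E - g)) / (2 (E - g)²)`,
and its numerator is exactly `(E - 2g) · (first moment equation) + (E - g) · (second one)`. -/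

open Real

theorem Real.sqrt_mul_lt_add_div_two {a b : ℝ} (hab : 0 < a + b) (hne : a ≠ b) :
    √(a * b) < (a + b) / 2 := by
  rw [Real.sqrt_lt' (by linarith)]
  nlinarith [sq_pos_of_ne_zero (sub_ne_zero.mpr hne)]

theorem log_energy_eq_div {m g E : ℝ} (hg : 0 < g) (hgm : g < m) (hE : E = (m + g) / 2) :
    (1 / 2) * log ((m ^ 2 - g ^ 2) / 4)
      - (2 * g ^ 2 / (m - g) ^ 2) * log ((m + g) / (2 * g))
      + (3 * g - m) / (2 * (m - g))
      = ((E - g) ^ 2 * (log E + log (E - g)) - g ^ 2 * (log E - log g)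
          + (2 * g - E) * (E - g)) / (2 * (E - g) ^ 2) := by
  obtain rfl : m = 2 * E - g := by linarith
  have hE0 : 0 < E := by linarith
  have hEg : 0 < E - g := by linarith
  have hprod : ((2 * E - g) ^ 2 - g ^ 2) / 4 = E * (E - g) := by ring
  have hquot : (2 * E - g + g) / (2 * g) = E / g := by field_simp; ring
  have hdiff : 2 * E - g - g = 2 * (E - g) := by ring
  rw [hprod, hquot, hdiff, log_mul hE0.ne' hEg.ne', log_div hE0.ne' hg.ne']
  field_simp
  ring

theorem stmt_19 (a b m g E : ℝ) (ha : 0 < a) (hab : a < b)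
    (hm : m = (a + b) / 2) (hg : g = Real.sqrt (a * b)) (hE : E = (m + g) / 2)
    (h1 : E * Real.log E - E = g * Real.log g - g)
    (h2 : g * Real.log g = (g - E) * Real.log (E - g)) :
    (1 / 2) * Real.log ((m ^ 2 - g ^ 2) / 4)
      - (2 * g ^ 2 / (m - g) ^ 2) * Real.log ((m + g) / (2 * g))
      + (3 * g - m) / (2 * (m - g)) = 0 := by
  have hg0 : 0 < g := hg ▸ Real.sqrt_pos.mpr (mul_pos ha (ha.trans hab))
  have hgm : g < m := hg ▸ hm ▸ Real.sqrt_mul_lt_add_div_two (by linarith) hab.ne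
  rw [log_energy_eq_div hg0 hgm hE, div_eq_zero_iff]
  left
  linear_combination (E - 2 * g) * h1 + (E - g) * h2
end
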